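/- Suppose (ψ,z) ∈ Λ^b(Y,X), i.e. z_t + ψ_t Y_t − z_{t+1} ∈ Q_t for t = 0,…,T−1 and z_t + ψ_t Y_t + ψ*_{t+1} X_t ∈ Q_t for t = 0,…,T (z predictable, z_{T+1} = 0). Then for every t: on {ψ*_t > 0}, z_t ∈ ψ*_t Z^b_t; on {ψ*_t = 0}, z_t ∈ Q_t, where Z^b_T := −Y_T + Q_T, W^b_t := Z^b_{t+1} ∩ L_t, V^b_t := W^b_t + Q_t, Z^b_t := conv{V^b_t ∩ (−X_t + Q_t), −Y_t + Q_t}. -/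

import Mathlib

/-!
Backward induction on `t`. Put `a = ψ_t`, `b = ψ*_{t+1}` and `C = 𝒵ᵇ_t`. Since `Q_t` is a
cone, the constraint `z_t + a Y_t + b X_t ∈ Q_t` says `z_t + a Y_t ∈ b (−X_t + Q_t)`, and the
constraint `z_t + a Y_t − z_{t+1} ∈ Q_t` together with the induction hypothesis
`z_{t+1} ∈ b (𝒵ᵇ_{t+1} ∩ L_t)` says `z_t + a Y_t ∈ b ((𝒵ᵇ_{t+1} ∩ L_t) + Q_t)`. Hence
`z_t = a (−Y_t) + (z_t + a Y_t) ∈ a C + b C = (a + b) C` by convexity of `C`, and `a + b = ψ*_t`.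
-/

open Pointwise

/-- Auxiliary backward recursion for the buyer's construction: `buyerZ T L Q Y X n`
is the set 𝒵ᵇ_{T−n}, i.e. 𝒵ᵇ_T = −Y_T + Q_T and, for t = T−(n+1),
𝒵ᵇ_t = conv{((𝒵ᵇ_{t+1} ∩ L_t) + Q_t) ∩ (−X_t + Q_t), −Y_t + Q_t}. -/
def buyerZ {V : Type*} [AddCommGroup V] [Module ℝ V]
    (T : ℕ) (L Q : ℕ → Set V) (Y X : ℕ → V) : ℕ → Set V
  | 0 => {-Y T} + Q T
  | n + 1 =>
      convexHull ℝ
        (((((buyerZ T L Q Y X n ∩ L (T - (n + 1))) + Q (T - (n + 1)))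
              ∩ ({-X (T - (n + 1))} + Q (T - (n + 1)))))
          ∪ ({-Y (T - (n + 1))} + Q (T - (n + 1))))

section Cone

variable {𝕜 V : Type*} [Field 𝕜] [LinearOrder 𝕜]
  [AddCommGroup V] [Module 𝕜 V] {Q : Set V}

theorem mem_smul_singleton_neg_add_of_add_smul_mem (hQ : ∀ c : 𝕜, 0 < c → c • Q = Q)
    {c : 𝕜} (hc : 0 < c) {z y : V} (h : z + c • y ∈ Q) : z ∈ c • ({-y} + Q) := by
  rw [smul_add, Set.smul_set_singleton, hQ c hc, Set.singleton_add]
  exact ⟨z + c • y, h, by rw [smul_neg]; exact neg_add_cancel_comm_assoc _ _⟩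

theorem mem_smul_inter_of_sub_mem_of_add_smul_mem (hQ : ∀ c : 𝕜, 0 < c → c • Q = Q)
    (L : Submodule 𝕜 V) {Z : Set V} {b : 𝕜} (hb : 0 < b) {w z' x : V}
    (hz' : z' ∈ b • Z) (hz'L : z' ∈ L) (h1 : w - z' ∈ Q) (h2 : w + b • x ∈ Q) :
    w ∈ b • (((Z ∩ L) + Q) ∩ ({-x} + Q)) := by
  have hz'L' : z' ∈ b • (L : Set V) :=
    (Set.mem_smul_set_iff_inv_smul_mem₀ hb.ne' _ _).2 (L.smul_mem _ hz'L)
  rw [Set.smul_set_inter₀ hb.ne', smul_add, Set.smul_set_inter₀ hb.ne', hQ b hb]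
  exact ⟨⟨z', ⟨hz', hz'L'⟩, w - z', h1, add_sub_cancel z' w⟩,
    mem_smul_singleton_neg_add_of_add_smul_mem hQ hb h2⟩

theorem mem_smul_convexHull_of_sub_mem_of_add_smul_mem [IsStrictOrderedRing 𝕜]
    (hQ : ∀ c : 𝕜, 0 < c → c • Q = Q) (hQ0 : 0 ∈ Q) (L : Submodule 𝕜 V) {Z : Set V}
    {a b : 𝕜} (ha : 0 ≤ a) (hb : 0 ≤ b) (hab : 0 < a + b) {z z' x y : V}
    (hz' : 0 < b → z' ∈ b • Z) (hz'L : z' ∈ L)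
    (h1 : z + a • y - z' ∈ Q) (h2 : z + a • y + b • x ∈ Q) :
    z ∈ (a + b) • convexHull 𝕜 ((((Z ∩ L) + Q) ∩ ({-x} + Q)) ∪ ({-y} + Q)) := by
  rcases hb.eq_or_lt with rfl | hb
  · rw [add_zero] at hab ⊢
    rw [zero_smul, add_zero] at h2
    exact Set.smul_set_mono (Set.subset_union_right.trans (subset_convexHull 𝕜 _))
      (mem_smul_singleton_neg_add_of_add_smul_mem hQ hab h2)
  · have hy : -y ∈ convexHull 𝕜 ((((Z ∩ L) + Q) ∩ ({-x} + Q)) ∪ ({-y} + Q)) :=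
      subset_convexHull 𝕜 _ (Or.inr ⟨-y, rfl, 0, hQ0, add_zero _⟩)
    rw [(convex_convexHull 𝕜 _).add_smul ha hb.le]
    refine ⟨a • -y, Set.smul_mem_smul_set hy, z + a • y, ?_, ?_⟩
    · exact Set.smul_set_mono (Set.subset_union_left.trans (subset_convexHull 𝕜 _))
        (mem_smul_inter_of_sub_mem_of_add_smul_mem hQ L hb (hz' hb) hz'L h1 h2)
    · rw [smul_neg]
      exact neg_add_cancel_comm_assoc _ _

end Cone

theorem Finset.sum_Icc_eq_add_sum_Icc_add_one {M : Type*} [AddCommMonoid M] (f : ℕ → M)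
    {t T : ℕ} (ht : t ≤ T) : ∑ s ∈ Icc t T, f s = f t + ∑ s ∈ Icc (t + 1) T, f s := by
  rw [Icc_add_one_left_eq_Ioc, add_sum_Ioc_eq_sum_Icc ht]

section Buyer

variable {V : Type*} [AddCommGroup V] [Module ℝ V] {T : ℕ}

theorem buyerZ_sub_of_lt (L Q : ℕ → Set V) (Y X : ℕ → V) {t : ℕ} (ht : t < T) :
    buyerZ T L Q Y X (T - t) =
      convexHull ℝ ((((buyerZ T L Q Y X (T - (t + 1)) ∩ L t) + Q t) ∩ ({-X t} + Q t))
        ∪ ({-Y t} + Q t)) := by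
  obtain ⟨n, hn⟩ : ∃ n, T - t = n + 1 := ⟨T - (t + 1), by omega⟩
  rw [hn, buyerZ, show T - (t + 1) = n by omega, show T - (n + 1) = t by omega]

variable {L : ℕ → Submodule ℝ V} {Q : ℕ → Set V} {Y X z : ℕ → V} {ψ : ℕ → ℝ}

theorem mem_smul_buyerZ (hQsmul : ∀ t, ∀ c : ℝ, 0 < c → c • Q t = Q t)
    (hQ0 : ∀ t, (0 : V) ∈ Q t) (hψ : ∀ t ≤ T, 0 ≤ ψ t) (hpred : ∀ t ≤ T, z (t + 1) ∈ L t)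
    (h1 : ∀ t < T, z t + ψ t • Y t - z (t + 1) ∈ Q t)
    (h2 : ∀ t ≤ T, z t + ψ t • Y t + (∑ s ∈ Finset.Icc (t + 1) T, ψ s) • X t ∈ Q t)
    {t : ℕ} (ht : t ≤ T) (hpos : 0 < ∑ s ∈ Finset.Icc t T, ψ s) :
    z t ∈ (∑ s ∈ Finset.Icc t T, ψ s) • buyerZ T (fun u => (L u : Set V)) Q Y X (T - t) := by
  induction ht using Nat.decreasingInduction with
  | self =>
    simp only [Finset.Icc_self, Finset.sum_singleton] at hpos ⊢
    have h2T := h2 T le_rfl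
    rw [Finset.Icc_eq_empty (by omega), Finset.sum_empty, zero_smul, add_zero] at h2T
    rw [Nat.sub_self]
    exact mem_smul_singleton_neg_add_of_add_smul_mem (hQsmul T) hpos h2T
  | of_succ t ht ih =>
    rw [Finset.sum_Icc_eq_add_sum_Icc_add_one ψ ht.le] at hpos ⊢
    rw [buyerZ_sub_of_lt _ _ _ _ ht]
    exact mem_smul_convexHull_of_sub_mem_of_add_smul_mem (hQsmul t) (hQ0 t) (L t)
      (hψ t ht.le) (Finset.sum_nonneg fun s hs => hψ s (Finset.mem_Icc.1 hs).2) hpos ih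
      (hpred t ht.le) (h1 t ht) (h2 t ht.le)

theorem mem_of_sum_Icc_eq_zero (hψ : ∀ t ≤ T, 0 ≤ ψ t)
    (h2 : ∀ t ≤ T, z t + ψ t • Y t + (∑ s ∈ Finset.Icc (t + 1) T, ψ s) • X t ∈ Q t)
    {t : ℕ} (ht : t ≤ T) (h0 : ∑ s ∈ Finset.Icc t T, ψ s = 0) : z t ∈ Q t := by
  rw [Finset.sum_Icc_eq_add_sum_Icc_add_one ψ ht] at h0
  obtain ⟨hψt, htail⟩ := (add_eq_zero_iff_of_nonneg (hψ t ht)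
    (Finset.sum_nonneg fun s hs => hψ s (Finset.mem_Icc.1 hs).2)).1 h0
  simpa only [hψt, htail, zero_smul, add_zero] using h2 t ht

end Buyer

theorem stmt13_general {V : Type*} [AddCommGroup V] [Module ℝ V] (T : ℕ)
    (L : ℕ → Submodule ℝ V) (Q : ℕ → Set V)
    (hQ0 : ∀ t, (0 : V) ∈ Q t)
    (hQsmul : ∀ t, ∀ c : ℝ, 0 < c → c • Q t = Q t)
    (Y X : ℕ → V) (ψ : ℕ → ℝ)
    (hψ : ∀ t ≤ T, 0 ≤ ψ t)
    (z : ℕ → V)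
    (hpred : ∀ t ≤ T, z (t + 1) ∈ L t)
    (h1 : ∀ t < T, z t + ψ t • Y t - z (t + 1) ∈ Q t)
    (h2 : ∀ t ≤ T, z t + ψ t • Y t + (∑ s ∈ Finset.Icc (t + 1) T, ψ s) • X t ∈ Q t) :
    ∀ t ≤ T,
      (0 < (∑ s ∈ Finset.Icc t T, ψ s) →
          z t ∈ (∑ s ∈ Finset.Icc t T, ψ s) •
            buyerZ T (fun u => (L u : Set V)) Q Y X (T - t)) ∧
        ((∑ s ∈ Finset.Icc t T, ψ s) = 0 → z t ∈ Q t) := by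
  intro t ht
  exact ⟨mem_smul_buyerZ hQsmul hQ0 hψ hpred h1 h2 ht, mem_of_sum_Icc_eq_zero hψ h2 ht⟩

/-- If (ψ,z) ∈ Λᵇ(Y,X), i.e. z_t + ψ_t Y_t − z_{t+1} ∈ Q_t for t < T and
z_t + ψ_t Y_t + ψ*_{t+1} X_t ∈ Q_t for t ≤ T, with z predictable and z_{T+1} = 0,
then for every t ≤ T: z_t ∈ ψ*_t 𝒵ᵇ_t when ψ*_t > 0, and z_t ∈ Q_t when ψ*_t = 0. -/
theorem stmt13 {V : Type*} [AddCommGroup V] [Module ℝ V] (T : ℕ)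
    (L : ℕ → Submodule ℝ V) (Q : ℕ → Set V)
    (hQconv : ∀ t, Convex ℝ (Q t))
    (hQ0 : ∀ t, (0 : V) ∈ Q t)
    (hQadd : ∀ t, Q t + Q t = Q t)
    (hQsmul : ∀ t, ∀ c : ℝ, 0 < c → c • Q t = Q t)
    (hQL : ∀ t, Q (t + 1) ∩ (L t : Set V) ⊆ Q t)
    (Y X : ℕ → V) (ψ : ℕ → ℝ)
    (hψ : ∀ t ≤ T, 0 ≤ ψ t)
    (hψsum : ∑ t ∈ Finset.range (T + 1), ψ t = 1)
    (z : ℕ → V) (hzT : z (T + 1) = 0)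
    (hpred : ∀ t ≤ T, z (t + 1) ∈ L t)
    (h1 : ∀ t < T, z t + ψ t • Y t - z (t + 1) ∈ Q t)
    (h2 : ∀ t ≤ T, z t + ψ t • Y t + (∑ s ∈ Finset.Icc (t + 1) T, ψ s) • X t ∈ Q t) :
    ∀ t ≤ T,
      (0 < (∑ s ∈ Finset.Icc t T, ψ s) →
          z t ∈ (∑ s ∈ Finset.Icc t T, ψ s) •
            buyerZ T (fun u => (L u : Set V)) Q Y X (T - t)) ∧
        ((∑ s ∈ Finset.Icc t T, ψ s) = 0 → z t ∈ Q t) :=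
  stmt13_general T L Q hQ0 hQsmul Y X ψ hψ z hpred h1 h2
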